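/- Seller deviation lemma (in expectation over the buyer's value): for every nondecreasing c : [0,1] → ℝ, every Borel probability measure ν on ℝ with ∫|v| dν(v) < ∞, and every λ ∈ (0,1), the seller's optimal proposer utility satisfies u_S := ∫₀¹ sup_{p ∈ ℝ} ((p − c(q))·ν({v : v ≥ p})) dq ≥ ∫_ℝ (∫₀^{λ·x(v)} (c(q/λ) − c(q)) dq) dν(v). -/

import Mathlib

open MeasureTheory Set

/-- The probability that the seller (with cost curve `c` on quantiles in `[0,1]`)
accepts a price `p`: the Lebesgue measure of `{q ∈ [0,1] : c q ≤ p}`. -/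
noncomputable def accProb (c : ℝ → ℝ) (p : ℝ) : ℝ :=
  (volume {q : ℝ | q ∈ Icc (0:ℝ) 1 ∧ c q ≤ p}).toReal

/-- First-best gains from trade, in expectation over the buyer value `v ∼ ν`. -/
noncomputable def FB (c : ℝ → ℝ) (ν : Measure ℝ) : ℝ :=
  ∫ v, (∫ q in (0:ℝ)..1, max (v - c q) 0) ∂ν

/-- The buyer's expected optimal proposer utility. -/
noncomputable def uB (c : ℝ → ℝ) (ν : Measure ℝ) : ℝ :=
  ∫ v, (⨆ p : ℝ, (v - p) * accProb c p) ∂ν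

/-- The seller's expected optimal proposer utility. -/
noncomputable def uS (c : ℝ → ℝ) (ν : Measure ℝ) : ℝ :=
  ∫ q in (0:ℝ)..1, ⨆ p : ℝ, (p - c q) * (ν {v : ℝ | p ≤ v}).toReal

/-! A seller of quantile `q ≤ λ` may deviate to the price `c (q / λ)`, so her best utility
is at least `(c (q / λ) - c q) · ν[v ≥ c (q / λ)]`; integrability of `v` makes every best
utility finite. Integrating over `q ∈ (0, λ]` and exchanging the order of integration gives
`∫ ν(dv) ∫_{(0, λ]} 1[c (q / λ) ≤ v] (c (q / λ) - c q) dq`. Since `c` is monotone, every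
quantile below `x(v)` has cost `≤ v`, so the indicator is `1` for `q < λ x(v)`, and the
integrand is nonnegative. -/

/-- `uS c ν` is `∫ q in 0..1, bestProposalUtility ν (c q)` definitionally. -/
noncomputable def bestProposalUtility (ν : Measure ℝ) (a : ℝ) : ℝ :=
  ⨆ p : ℝ, (p - a) * (ν {v : ℝ | p ≤ v}).toReal

section BestProposal

variable {ν : Measure ℝ} [IsFiniteMeasure ν]

lemma sub_mul_tail_le_integral_abs_sub (hν : Integrable (fun v : ℝ => v) ν) (a p : ℝ) :
    (p - a) * (ν {v : ℝ | p ≤ v}).toReal ≤ ∫ v, |v - a| ∂ν := by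
  rcases le_or_gt p a with hpa | hap
  · exact (mul_nonpos_of_nonpos_of_nonneg (by linarith) ENNReal.toReal_nonneg).trans
      (integral_nonneg fun v => abs_nonneg _)
  · calc (p - a) * (ν {v : ℝ | p ≤ v}).toReal
          ≤ (p - a) * ν.real {v | p - a ≤ |v - a|} := by
          refine mul_le_mul_of_nonneg_left (measureReal_mono fun v (hv : p ≤ v) => ?_)
            (by linarith)
          exact le_abs.2 (Or.inl (sub_le_sub_right hv a))
      _ ≤ ∫ v, |v - a| ∂ν := mul_meas_ge_le_integral_of_nonneg
          (ae_of_all _ fun v => abs_nonneg _) (hν.sub (integrable_const a)).abs _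

variable (hν : Integrable (fun v : ℝ => v) ν)
include hν

lemma le_bestProposalUtility (a p : ℝ) :
    (p - a) * (ν {v : ℝ | p ≤ v}).toReal ≤ bestProposalUtility ν a :=
  le_ciSup ⟨_, forall_mem_range.2 (sub_mul_tail_le_integral_abs_sub hν a)⟩ p

lemma bestProposalUtility_nonneg (a : ℝ) : 0 ≤ bestProposalUtility ν a := by
  simpa using le_bestProposalUtility hν a a

lemma bestProposalUtility_antitone : Antitone (bestProposalUtility ν) := fun a b hab =>
  ciSup_le fun p => (mul_le_mul_of_nonneg_right (by linarith) ENNReal.toReal_nonneg).trans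
    (le_bestProposalUtility hν a p)

end BestProposal

section AcceptanceProbability

variable {c : ℝ → ℝ}

lemma accProb_nonneg (c : ℝ → ℝ) (p : ℝ) : 0 ≤ accProb c p := ENNReal.toReal_nonneg

lemma accProb_le_one (c : ℝ → ℝ) (p : ℝ) : accProb c p ≤ 1 := by
  calc accProb c p ≤ volume.real (Icc (0:ℝ) 1) :=
        measureReal_mono (fun q hq => hq.1) measure_Icc_lt_top.ne
    _ = 1 := by simp

lemma accProb_congr {c' : ℝ → ℝ} (h : EqOn c c' (Icc 0 1)) : accProb c = accProb c' := by
  funext p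
  simp only [accProb]
  congr 3
  ext q
  exact and_congr_right fun hq => by rw [h hq]

lemma le_of_lt_accProb (hc : MonotoneOn c (Icc 0 1)) {t v : ℝ} (ht0 : 0 ≤ t)
    (ht : t < accProb c v) : c t ≤ v := by
  by_contra! hvt
  have ht1 : t ≤ 1 := ht.le.trans (accProb_le_one c v)
  have hsub : {q | q ∈ Icc (0:ℝ) 1 ∧ c q ≤ v} ⊆ Ico 0 t := fun q ⟨hq, hcq⟩ =>
    ⟨hq.1, lt_of_not_ge fun htq => (hvt.trans_le (hc ⟨ht0, ht1⟩ hq htq)).not_ge hcq⟩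
  have := measureReal_mono (μ := volume) hsub measure_Ico_lt_top.ne
  rw [Real.volume_real_Ico, max_eq_left (by linarith), sub_zero] at this
  exact (ht.trans_le this).false

end AcceptanceProbability

section Fubini

variable {β : Type*} [MeasurableSpace β] {μ : Measure β}
  {ν : Measure ℝ} [IsFiniteMeasure ν] {p f : β → ℝ}

lemma Integrable.ite_le (hp : Measurable p) (hf : Integrable f μ) (v : ℝ) :
    Integrable (fun q => if p q ≤ v then f q else 0) μ := by
  refine (hf.indicator (measurableSet_le hp (measurable_const (a := v)))).congr
    (ae_of_all _ fun q => ?_)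
  simp [indicator_apply]

lemma integrable_prod_ite_le [SFinite μ] (hp : Measurable p) (hf : Integrable f μ) :
    Integrable (Function.uncurry fun v q => if p q ≤ v then f q else 0) (ν.prod μ) := by
  refine ((hf.comp_snd ν).indicator (measurableSet_le (hp.comp measurable_snd)
    measurable_fst)).congr (ae_of_all _ fun x => ?_)
  simp [indicator_apply, Function.uncurry]

lemma integral_integral_ite_le [SFinite μ] (hp : Measurable p) (hf : Integrable f μ) :
    ∫ v, (∫ q, (if p q ≤ v then f q else 0) ∂μ) ∂ν
      = ∫ q, f q * (ν {v | p q ≤ v}).toReal ∂μ := by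
  rw [integral_integral_swap (integrable_prod_ite_le hp hf)]
  congr 1
  funext q
  have := integral_indicator_const (μ := ν) (f q) (measurableSet_Ici (a := p q))
  simp only [indicator_apply, mem_Ici, smul_eq_mul] at this
  rw [this, mul_comm]
  rfl

end Fubini

section MonotoneCost

variable {c : ℝ → ℝ} {l : ℝ}

lemma Monotone.apply_div_sub_apply_nonneg (hc : Monotone c) (hl0 : 0 < l) (hl1 : l ≤ 1)
    {q : ℝ} (hq : 0 ≤ q) :
    0 ≤ c (q / l) - c q :=
  sub_nonneg.2 (hc (le_div_self hq hl0 hl1))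

lemma Monotone.comp_div_right (hc : Monotone c) (hl0 : 0 < l) : Monotone fun q => c (q / l) :=
  hc.comp fun _ _ h => div_le_div_of_nonneg_right h hl0.le

lemma Monotone.integrableOn_apply_div_sub_apply (hc : Monotone c) (hl0 : 0 < l) :
    IntegrableOn (fun q => c (q / l) - c q) (Ioc 0 l) :=
  ((hc.comp_div_right hl0).intervalIntegrable.sub hc.intervalIntegrable).1

lemma intervalIntegral_apply_div_sub_le_setIntegral_ite (hc : Monotone c) (hl0 : 0 < l)
    (hl1 : l ≤ 1) (v : ℝ) :
    ∫ q in (0:ℝ)..(l * accProb c v), (c (q / l) - c q)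
      ≤ ∫ q in Ioc 0 l, if c (q / l) ≤ v then c (q / l) - c q else 0 := by
  have hx0 := accProb_nonneg c v
  have hx1 := accProb_le_one c v
  rw [intervalIntegral.integral_of_le (by positivity), integral_Ioc_eq_integral_Ioo]
  calc ∫ q in Ioo 0 (l * accProb c v), (c (q / l) - c q)
      = ∫ q in Ioo 0 (l * accProb c v), if c (q / l) ≤ v then c (q / l) - c q else 0 := by
        refine setIntegral_congr_fun measurableSet_Ioo fun q hq => (if_pos ?_).symm
        exact le_of_lt_accProb (hc.monotoneOn _) (div_nonneg hq.1.le hl0.le)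
          ((div_lt_iff₀' hl0).2 hq.2)
    _ ≤ ∫ q in Ioc 0 l, if c (q / l) ≤ v then c (q / l) - c q else 0 := by
        refine setIntegral_mono_set (Integrable.ite_le (hc.comp_div_right hl0).measurable
          (hc.integrableOn_apply_div_sub_apply hl0) v) ?_
          (Ioo_subset_Ioc_self.trans (Ioc_subset_Ioc_right (by nlinarith))).eventuallyLE
        filter_upwards [ae_restrict_mem measurableSet_Ioc] with q hq
        split_ifs
        exacts [hc.apply_div_sub_apply_nonneg hl0 hl1 hq.1.le, le_rfl]

theorem Monotone.integral_intervalIntegral_le_uS (hc : Monotone c) {ν : Measure ℝ}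
    [IsFiniteMeasure ν] (hν : Integrable (fun v : ℝ => v) ν) (hl0 : 0 < l) (hl1 : l ≤ 1) :
    ∫ v, (∫ q in (0:ℝ)..(l * accProb c v), (c (q / l) - c q)) ∂ν ≤ uS c ν := by
  have hp : Measurable fun q => c (q / l) := (hc.comp_div_right hl0).measurable
  have hgain := hc.integrableOn_apply_div_sub_apply hl0
  have hK : Antitone fun q => bestProposalUtility ν (c q) :=
    (bestProposalUtility_antitone hν).comp_monotone hc
  calc ∫ v, (∫ q in (0:ℝ)..(l * accProb c v), (c (q / l) - c q)) ∂ν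
      ≤ ∫ v, (∫ q in Ioc 0 l, if c (q / l) ≤ v then c (q / l) - c q else 0) ∂ν := by
        refine integral_mono_of_nonneg (ae_of_all _ fun v => ?_)
          (integrable_prod_ite_le hp hgain).integral_prod_left
          (ae_of_all _ (intervalIntegral_apply_div_sub_le_setIntegral_ite hc hl0 hl1))
        exact intervalIntegral.integral_nonneg (by positivity [accProb_nonneg c v])
          fun q hq => hc.apply_div_sub_apply_nonneg hl0 hl1 hq.1
    _ = ∫ q in Ioc 0 l, (c (q / l) - c q) * (ν {v | c (q / l) ≤ v}).toReal :=
        integral_integral_ite_le hp hgain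
    _ ≤ ∫ q in Ioc 0 l, bestProposalUtility ν (c q) := by
        refine integral_mono_of_nonneg ?_ hK.intervalIntegrable.1
          (ae_of_all _ fun q => le_bestProposalUtility hν (c q) (c (q / l)))
        filter_upwards [ae_restrict_mem measurableSet_Ioc] with q hq
        exact mul_nonneg (hc.apply_div_sub_apply_nonneg hl0 hl1 hq.1.le) ENNReal.toReal_nonneg
    _ ≤ ∫ q in Ioc 0 1, bestProposalUtility ν (c q) :=
        setIntegral_mono_set hK.intervalIntegrable.1
          (ae_of_all _ fun q => bestProposalUtility_nonneg hν (c q))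
          (Ioc_subset_Ioc_right hl1).eventuallyLE
    _ = uS c ν := (intervalIntegral.integral_of_le zero_le_one).symm

end MonotoneCost

lemma uS_congr {c c' : ℝ → ℝ} (h : EqOn c c' (Icc 0 1)) (ν : Measure ℝ) :
    uS c ν = uS c' ν :=
  intervalIntegral.integral_congr fun q hq => by
    rw [uIcc_of_le zero_le_one] at hq
    rw [h hq]

lemma intervalIntegral_apply_div_sub_congr {c c' : ℝ → ℝ} (h : EqOn c c' (Icc 0 1)) {l : ℝ}
    (hl0 : 0 < l) (hl1 : l ≤ 1) (v : ℝ) :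
    ∫ q in (0:ℝ)..(l * accProb c v), (c (q / l) - c q)
      = ∫ q in (0:ℝ)..(l * accProb c' v), (c' (q / l) - c' q) := by
  rw [← accProb_congr h]
  refine intervalIntegral.integral_congr fun q hq => ?_
  rw [uIcc_of_le (by positivity [accProb_nonneg c v])] at hq
  have hql : q ≤ l := hq.2.trans (mul_le_of_le_one_right hl0.le (accProb_le_one c v))
  rw [h ⟨hq.1, hql.trans hl1⟩, h ⟨div_nonneg hq.1 hl0.le, (div_le_one hl0).2 hql⟩]

theorem stmt5 (c : ℝ → ℝ) (hc : MonotoneOn c (Icc (0:ℝ) 1))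
    (ν : Measure ℝ) [IsProbabilityMeasure ν]
    (hν : Integrable (fun v : ℝ => v) ν)
    (l : ℝ) (hl : l ∈ Ioo (0:ℝ) 1) :
    uS c ν ≥ ∫ v, (∫ q in (0:ℝ)..(l * accProb c v), (c (q / l) - c q)) ∂ν := by
  obtain ⟨hl0, hl1⟩ := hl
  -- Only the values of `c` on `[0, 1]` matter; a monotone extension to `ℝ` is measurable.
  obtain ⟨c', hc', hcc'⟩ : ∃ c' : ℝ → ℝ, Monotone c' ∧ EqOn c c' (Icc 0 1) :=
    ⟨IccExtend zero_le_one fun q : Icc (0:ℝ) 1 => c q,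
      (monotoneOn_iff_monotone.1 hc).IccExtend zero_le_one,
      fun q hq => (IccExtend_of_mem zero_le_one (fun q : Icc (0:ℝ) 1 => c q) hq).symm⟩
  simp only [ge_iff_le, uS_congr hcc', intervalIntegral_apply_div_sub_congr hcc' hl0 hl1.le]
  exact hc'.integral_intervalIntegral_le_uS hν hl0 hl1.le
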